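/- (First inequality of Theorem 1.) If 0 ≤ S i j = S j i ≤ 1 for all i, j, i ∉ N_u(i), and i ∉ N_v(i) for all i, then the GRACE objective is at most the HomoGCL objective: (1/(2N)) Σ_{i=1}^{N} ( ℓ(u_i, v_i) + ℓ(v_i, u_i) ) ≤ (1/(2N)) Σ_{i=1}^{N} ( ℓ_cont(u_i, v_i) + ℓ_cont(v_i, u_i) ), where ℓ(v_i, u_i) and ℓ_cont(v_i, u_i) are obtained from ℓ(u_i, v_i) and ℓ_cont(u_i, v_i) by exchanging the roles of u and v (and of N_u(i) and N_v(i)). -/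

import Mathlib

/-- The HomoGCL positive term for node `i` (view order `u, v`, neighbor set `Nu`). -/
noncomputable def posTerm {N d' : ℕ} (u v : Fin N → EuclideanSpace ℝ (Fin d'))
    (θ : EuclideanSpace ℝ (Fin d') → EuclideanSpace ℝ (Fin d') → ℝ) (τ : ℝ)
    (S : Fin N → Fin N → ℝ) (Nu : Fin N → Finset (Fin N)) (i : Fin N) : ℝ :=
  Real.exp (θ (u i) (v i) / τ) + ∑ j ∈ Nu i, Real.exp (θ (u i) (u j) / τ) * S i j

/-- The HomoGCL negative term for node `i` (view order `u, v`, neighbor sets `Nu`, `Nv`). -/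
noncomputable def negTerm {N d' : ℕ} (u v : Fin N → EuclideanSpace ℝ (Fin d'))
    (θ : EuclideanSpace ℝ (Fin d') → EuclideanSpace ℝ (Fin d') → ℝ) (τ : ℝ)
    (Nu Nv : Fin N → Finset (Fin N)) (i : Fin N) : ℝ :=
  ∑ j ∈ Finset.univ \ insert i (Nv i), Real.exp (θ (u i) (v j) / τ) +
    ∑ j ∈ Finset.univ \ insert i (Nu i), Real.exp (θ (u i) (u j) / τ)

/-- The HomoGCL per-node loss `ℓ_cont(u_i, v_i)`. -/
noncomputable def lCont {N d' : ℕ} (u v : Fin N → EuclideanSpace ℝ (Fin d'))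
    (θ : EuclideanSpace ℝ (Fin d') → EuclideanSpace ℝ (Fin d') → ℝ) (τ : ℝ)
    (S : Fin N → Fin N → ℝ) (Nu Nv : Fin N → Finset (Fin N)) (i : Fin N) : ℝ :=
  Real.log (posTerm u v θ τ S Nu i /
    (posTerm u v θ τ S Nu i + negTerm u v θ τ Nu Nv i))

/-- The GRACE per-node loss `ℓ(u_i, v_i)`. -/
noncomputable def lGrace {N d' : ℕ} (u v : Fin N → EuclideanSpace ℝ (Fin d'))
    (θ : EuclideanSpace ℝ (Fin d') → EuclideanSpace ℝ (Fin d') → ℝ) (τ : ℝ)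
    (i : Fin N) : ℝ :=
  Real.log (Real.exp (θ (u i) (v i) / τ) /
    (Real.exp (θ (u i) (v i) / τ) +
      ∑ j ∈ Finset.univ \ {i}, Real.exp (θ (u i) (v j) / τ) +
      ∑ j ∈ Finset.univ \ {i}, Real.exp (θ (u i) (u j) / τ)))

/-!
GRACE is HomoGCL with empty neighbourhoods. Moving the neighbours `Nu i` out of the negative
term into the positive one with weights `S i j ∈ [0, 1]`, and dropping the cross-view neighbours
`Nv i` from the negative term, can only increase the numerator `pos` and decrease the denominator
`pos + neg`, hence increase each logarithm.
-/

open Finset Real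

theorem Real.log_div_le_log_div {a b c d : ℝ} (ha : 0 < a) (hab : a ≤ b) (hd : 0 < d)
    (hdc : d ≤ c) : log (a / c) ≤ log (b / d) :=
  log_le_log (div_pos ha (hd.trans_le hdc)) (div_le_div₀ (ha.le.trans hab) hab hd hdc)

theorem Finset.sum_mul_add_sum_sdiff_le {ι R : Type*} [DecidableEq ι] [Semiring R]
    [PartialOrder R] [IsOrderedRing R] {s t : Finset ι} (hst : s ⊆ t) {f g : ι → R}
    (hf : ∀ j ∈ s, 0 ≤ f j) (hg : ∀ j ∈ s, g j ≤ 1) :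
    ∑ j ∈ s, f j * g j + ∑ j ∈ t \ s, f j ≤ ∑ j ∈ t, f j := by
  rw [← sum_sdiff hst, add_comm]
  gcongr with j hj
  exact mul_le_of_le_one_right (hf j hj) (hg j hj)

section HomoGCL

variable {N d' : ℕ} (u v : Fin N → EuclideanSpace ℝ (Fin d'))
  (θ : EuclideanSpace ℝ (Fin d') → EuclideanSpace ℝ (Fin d') → ℝ) (τ : ℝ)
  (S : Fin N → Fin N → ℝ) (Nu Nv : Fin N → Finset (Fin N)) (i : Fin N)

theorem lGrace_eq_lCont_empty :
    lGrace u v θ τ i = lCont u v θ τ S (fun _ => ∅) (fun _ => ∅) i := by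
  simp only [lGrace, lCont, posTerm, negTerm, sum_empty, add_zero, insert_empty_eq, add_assoc]

theorem posTerm_empty_le (hS0 : ∀ j, 0 ≤ S i j) :
    posTerm u v θ τ S (fun _ => ∅) i ≤ posTerm u v θ τ S Nu i := by
  simp only [posTerm, sum_empty, add_zero, le_add_iff_nonneg_right]
  exact sum_nonneg fun j _ => mul_nonneg (exp_pos _).le (hS0 j)

theorem posTerm_add_negTerm_le_empty (hS1 : ∀ j, S i j ≤ 1) (hNu : i ∉ Nu i) :
    posTerm u v θ τ S Nu i + negTerm u v θ τ Nu Nv i ≤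
      posTerm u v θ τ S (fun _ => ∅) i + negTerm u v θ τ (fun _ => ∅) (fun _ => ∅) i := by
  have hsub : Nu i ⊆ univ \ {i} := fun j hj =>
    mem_sdiff.2 ⟨mem_univ j, fun hji => hNu (mem_singleton.1 hji ▸ hj)⟩
  have hsame_view := sum_mul_add_sum_sdiff_le hsub (f := fun j => exp (θ (u i) (u j) / τ))
    (fun j _ => (exp_pos _).le) (fun j _ => hS1 j)
  have hcross_view : ∑ j ∈ univ \ insert i (Nv i), exp (θ (u i) (v j) / τ) ≤
      ∑ j ∈ univ \ {i}, exp (θ (u i) (v j) / τ) :=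
    sum_le_sum_of_subset_of_nonneg
      (sdiff_subset_sdiff subset_rfl (singleton_subset_iff.2 (mem_insert_self i _)))
      fun j _ _ => (exp_pos _).le
  rw [sdiff_sdiff_left, sup_eq_union, ← insert_eq] at hsame_view
  simp only [posTerm, negTerm, sum_empty, add_zero, insert_empty_eq]
  linarith

theorem lGrace_le_lCont (hS0 : ∀ j, 0 ≤ S i j) (hS1 : ∀ j, S i j ≤ 1) (hNu : i ∉ Nu i) :
    lGrace u v θ τ i ≤ lCont u v θ τ S Nu Nv i := by
  have hpos : 0 < posTerm u v θ τ S (fun _ => ∅) i := by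
    simpa [posTerm] using exp_pos _
  have hneg : 0 ≤ negTerm u v θ τ Nu Nv i :=
    add_nonneg (sum_nonneg fun j _ => (exp_pos _).le) (sum_nonneg fun j _ => (exp_pos _).le)
  have hmono := posTerm_empty_le u v θ τ S Nu i hS0
  rw [lGrace_eq_lCont_empty u v θ τ S]
  exact log_div_le_log_div hpos hmono (by linarith)
    (posTerm_add_negTerm_le_empty u v θ τ S Nu Nv i hS1 hNu)

end HomoGCL

theorem grace_objective_le_homogcl_objective_general
    (N d' : ℕ)
    (u v : Fin N → EuclideanSpace ℝ (Fin d'))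
    (θ : EuclideanSpace ℝ (Fin d') → EuclideanSpace ℝ (Fin d') → ℝ)
    (τ : ℝ)
    (S : Fin N → Fin N → ℝ)
    (Nu Nv : Fin N → Finset (Fin N))
    (hS0 : ∀ i j, 0 ≤ S i j) (hS1 : ∀ i j, S i j ≤ 1)
    (hNu : ∀ i, i ∉ Nu i) (hNv : ∀ i, i ∉ Nv i) :
    (1 / (2 * (N : ℝ))) * ∑ i, (lGrace u v θ τ i + lGrace v u θ τ i) ≤
      (1 / (2 * (N : ℝ))) *
        ∑ i, (lCont u v θ τ S Nu Nv i + lCont v u θ τ S Nv Nu i) := by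
  gcongr with i
  exacts [lGrace_le_lCont u v θ τ S Nu Nv i (hS0 i) (hS1 i) (hNu i),
    lGrace_le_lCont v u θ τ S Nv Nu i (hS0 i) (hS1 i) (hNv i)]

/-- first inequality of Theorem 1: the GRACE objective is at most
the HomoGCL objective. -/
theorem grace_objective_le_homogcl_objective
    (N d' : ℕ) (hN : 1 ≤ N) (hd' : 1 ≤ d')
    (u v : Fin N → EuclideanSpace ℝ (Fin d'))
    (θ : EuclideanSpace ℝ (Fin d') → EuclideanSpace ℝ (Fin d') → ℝ)
    (τ : ℝ) (hτ : 0 < τ)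
    (S : Fin N → Fin N → ℝ)
    (Nu Nv : Fin N → Finset (Fin N))
    (hS0 : ∀ i j, 0 ≤ S i j) (hS1 : ∀ i j, S i j ≤ 1)
    (hSsymm : ∀ i j, S i j = S j i)
    (hNu : ∀ i, i ∉ Nu i) (hNv : ∀ i, i ∉ Nv i) :
    (1 / (2 * (N : ℝ))) * ∑ i, (lGrace u v θ τ i + lGrace v u θ τ i) ≤
      (1 / (2 * (N : ℝ))) *
        ∑ i, (lCont u v θ τ S Nu Nv i + lCont v u θ τ S Nv Nu i) :=
  grace_objective_le_homogcl_objective_general N d' u v θ τ S Nu Nv hS0 hS1 hNu hNv
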